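/- Let q be a prime power and let m, n > 1 be relatively prime integers with smallest prime divisors m₁ and n₁ respectively. Let φ(x,y) ∈ F_q[x,y] be a polynomial with 0 < deg_x φ < m₁ and 0 < deg_y φ < n₁. Let f, g ∈ F_q[x] be monic irreducible polynomials of degrees m and n, with roots α₁, …, α_m and β₁, …, β_n in the algebraic closure of F_q. Then the polynomial ∏_{i=1}^m ∏_{j=1}^n (x − φ(α_i, β_j)) is irreducible in F_q[x]. -/

import Mathlib

/-!
Let `γ = φ(α, β)` and `d = [𝔽_q(γ) : 𝔽_q]`. The product is a monic polynomial over `𝔽_q` of degree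
`mn` with root `γ`, so it is the minimal polynomial of `γ` as soon as `mn ∣ d`.

Let `σ = Frob^k` fix `β` and `γ` (for instance `k = dn`). Every `σ^t α` is then a root of
`φ(X, β) - γ`, which is nonzero of degree `deg_x φ < m₁` because `deg_y φ < n = [𝔽_q(β) : 𝔽_q]`.
Hence two of `α, σ α, …, σ^(deg_x φ) α` coincide, so `m ∣ jk` for some `0 < j < m₁`, and `j` is
prime to `m`: `m ∣ k`. For `k = dn` this gives `m ∣ d`, and symmetrically `n ∣ d`.
-/

open Polynomial

section FiniteFieldPowers

variable {F : Type*} [Field F] [Fintype F]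

theorem MvPolynomial.aeval_pow_card_pow {R σ : Type*} [CommRing R] [Algebra F R]
    (v : σ → R) (φ : MvPolynomial σ F) (k : ℕ) :
    aeval v φ ^ Fintype.card F ^ k = aeval (fun i => v i ^ Fintype.card F ^ k) φ := by
  induction k with
  | zero => simp
  | succ k ih =>
    simp_rw [pow_succ, pow_mul, ih, ← FiniteField.frobeniusAlgHom_apply F,
      MvPolynomial.comp_aeval_apply]

variable {L : Type*} [Field L] [Algebra F L]

theorem FiniteField.pow_card_pow_injective (k : ℕ) :
    Function.Injective fun x : L => x ^ Fintype.card F ^ k := by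
  rw [← pow_iterate]
  exact (frobeniusAlgHom F L).toRingHom.injective.iterate k

theorem FiniteField.pow_card_pow_eq_self_iff {x : L} (hx : IsIntegral F x) {k : ℕ} :
    x ^ Fintype.card F ^ k = x ↔ (minpoly F x).natDegree ∣ k := by
  rw [(minpoly.irreducible hx).natDegree_dvd_iff_dvd_X_pow_card_pow_sub_X, minpoly.dvd_iff,
    Nat.card_eq_fintype_card]
  simp [sub_eq_zero]

theorem FiniteField.natDegree_minpoly_dvd_sub_of_pow_card_pow_eq {x : L} (hx : IsIntegral F x)
    {i j : ℕ} (hij : i ≤ j) (h : x ^ Fintype.card F ^ i = x ^ Fintype.card F ^ j) :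
    (minpoly F x).natDegree ∣ j - i := by
  obtain ⟨d, rfl⟩ := Nat.exists_eq_add_of_le hij
  rw [Nat.add_sub_cancel_left, ← pow_card_pow_eq_self_iff hx]
  apply pow_card_pow_injective (F := F) i
  simp only [← pow_mul, ← pow_add, add_comm d, h]

end FiniteFieldPowers

namespace MvPolynomial

theorem eval_map_aeval_finSuccEquiv {R S : Type*} [CommSemiring R] [CommSemiring S] [Algebra R S]
    {n : ℕ} (f : MvPolynomial (Fin (n + 1)) R) (y : S) (s : Fin n → S) :
    ((finSuccEquiv R n f).map (aeval (R := R) s : MvPolynomial (Fin n) R →+* S)).eval y =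
      aeval (Fin.cons y s : Fin (n + 1) → S) f := by
  induction f using MvPolynomial.induction_on with
  | C a => simp [finSuccEquiv_apply]
  | add p q hp hq => simp [hp, hq]
  | mul_X p i hp =>
    induction i using Fin.cases <;> simp [hp, finSuccEquiv_X_zero, finSuccEquiv_X_succ]

theorem natDegree_uniqueAlgEquiv_le {R σ : Type*} [CommSemiring R] [Unique σ]
    (p : MvPolynomial σ R) : (uniqueAlgEquiv R σ p).natDegree ≤ p.degreeOf default := by
  refine natDegree_le_iff_coeff_eq_zero.mpr fun k hk => ?_
  rw [coeff_uniqueAlgEquiv]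
  by_contra hne
  have := monomial_le_degreeOf default (mem_support_iff.mpr hne)
  rw [Finsupp.single_eq_same] at this
  omega

variable {F L : Type*} [Field F] [Field L] [Algebra F L]

theorem aeval_ne_zero_of_degreeOf_lt_natDegree_minpoly {σ : Type*} [Unique σ]
    {p : MvPolynomial σ F} (hp : p ≠ 0) {a : σ → L}
    (hdeg : p.degreeOf default < (minpoly F (a default)).natDegree) : aeval a p ≠ 0 := by
  rw [aeval_def, ← eval₂_uniqueAlgEquiv, ← Polynomial.aeval_def]
  intro h0
  have := natDegree_le_natDegree
    (minpoly.degree_le_of_ne_zero F _ (EmbeddingLike.map_ne_zero_iff.mpr hp) h0)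
  have := natDegree_uniqueAlgEquiv_le p
  omega

/-- The polynomial on the left is `φ(X, β)`. -/
theorem natDegree_map_aeval_finSuccEquiv {φ : MvPolynomial (Fin 2) F} (hφ : φ ≠ 0) {β : L}
    (hβ : φ.degreeOf 1 < (minpoly F β).natDegree) :
    ((finSuccEquiv F 1 φ).map (aeval (R := F) ![β] : MvPolynomial (Fin 1) F →+* L)).natDegree =
      φ.degreeOf 0 := by
  rw [natDegree_map_of_leadingCoeff_ne_zero, natDegree_finSuccEquiv]
  refine aeval_ne_zero_of_degreeOf_lt_natDegree_minpoly (by simpa using hφ) ?_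
  exact (degreeOf_coeff_finSuccEquiv φ 0 _).trans_lt hβ

end MvPolynomial

section Conjugates

open FiniteField

variable {F L : Type*} [Field F] [Fintype F] [Field L] [Algebra F L] [Algebra.IsIntegral F L]

theorem natDegree_minpoly_dvd_of_aeval_dvd {α β : L} {φ : MvPolynomial (Fin 2) F}
    (hx₀ : 0 < φ.degreeOf 0) (hx₁ : φ.degreeOf 0 < (minpoly F α).natDegree.minFac)
    (hy : φ.degreeOf 1 < (minpoly F β).natDegree) {k : ℕ}
    (hβk : (minpoly F β).natDegree ∣ k)
    (hγk : (minpoly F (MvPolynomial.aeval ![α, β] φ)).natDegree ∣ k) :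
    (minpoly F α).natDegree ∣ k := by
  classical
  set q := Fintype.card F
  set γ := MvPolynomial.aeval ![α, β] φ
  set D := φ.degreeOf 0
  have hφ : φ ≠ 0 := by rintro rfl; simp [D] at hx₀
  set θ := (MvPolynomial.finSuccEquiv F 1 φ).map
    (MvPolynomial.aeval (R := F) ![β] : MvPolynomial (Fin 1) F →+* L) - C γ
  have hθdeg : θ.natDegree = D := by
    rw [natDegree_sub_C, MvPolynomial.natDegree_map_aeval_finSuccEquiv hφ hy]
  have hθ : θ ≠ 0 := by rintro h; rw [h, natDegree_zero] at hθdeg; omega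
  have hfix : ∀ x : L, (minpoly F x).natDegree ∣ k → ∀ t, x ^ q ^ (k * t) = x := fun x hx t =>
    (pow_card_pow_eq_self_iff (Algebra.IsIntegral.isIntegral x)).mpr (hx.mul_right t)
  have hroot : ∀ t, α ^ q ^ (k * t) ∈ θ.roots.toFinset := by
    intro t
    rw [Multiset.mem_toFinset, mem_roots hθ, IsRoot, eval_sub, eval_C,
      MvPolynomial.eval_map_aeval_finSuccEquiv, sub_eq_zero]
    conv_rhs => rw [← hfix γ hγk t, MvPolynomial.aeval_pow_card_pow]
    congr 2
    funext i
    fin_cases i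
    · rfl
    · exact (hfix β hβk t).symm
  have hcard : θ.roots.toFinset.card < (Finset.range (D + 1)).card := by
    have := (Multiset.toFinset_card_le θ.roots).trans (card_roots' θ)
    rw [Finset.card_range]
    omega
  obtain ⟨i, hi, j, hj, hij, heq⟩ :=
    Finset.exists_ne_map_eq_of_card_lt_of_maps_to hcard fun t _ => hroot t
  wlog hlt : i < j generalizing i j
  · exact this j hj i hi hij.symm heq.symm (by omega)
  have hdvd := natDegree_minpoly_dvd_sub_of_pow_card_pow_eq (Algebra.IsIntegral.isIntegral α)
    (Nat.mul_le_mul_left k hlt.le) heq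
  rw [← Nat.mul_sub] at hdvd
  rw [Finset.mem_range] at hj
  exact (Nat.coprime_of_lt_minFac (by omega) (by omega)).dvd_of_dvd_mul_right hdvd

theorem mul_dvd_natDegree_minpoly_aeval {α β : L} {φ : MvPolynomial (Fin 2) F}
    (hcop : Nat.Coprime (minpoly F α).natDegree (minpoly F β).natDegree)
    (hx₀ : 0 < φ.degreeOf 0) (hx₁ : φ.degreeOf 0 < (minpoly F α).natDegree.minFac)
    (hy₀ : 0 < φ.degreeOf 1) (hy₁ : φ.degreeOf 1 < (minpoly F β).natDegree.minFac) :
    (minpoly F α).natDegree * (minpoly F β).natDegree ∣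
      (minpoly F (MvPolynomial.aeval ![α, β] φ)).natDegree := by
  have hminFac_le (x : L) : (minpoly F x).natDegree.minFac ≤ (minpoly F x).natDegree :=
    Nat.minFac_le (minpoly.natDegree_pos (Algebra.IsIntegral.isIntegral x))
  have hα := hcop.dvd_of_dvd_mul_right <| natDegree_minpoly_dvd_of_aeval_dvd hx₀ hx₁
    (hy₁.trans_le (hminFac_le β)) (dvd_mul_left _ _) (dvd_mul_right _ _)
  set ψ := MvPolynomial.rename (Equiv.swap (0 : Fin 2) 1) φ
  have hψ₀ : ψ.degreeOf 0 = φ.degreeOf 1 := by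
    simpa using MvPolynomial.degreeOf_rename_of_injective (Equiv.swap (0 : Fin 2) 1).injective 1
      (p := φ)
  have hψ₁ : ψ.degreeOf 1 = φ.degreeOf 0 := by
    simpa using MvPolynomial.degreeOf_rename_of_injective (Equiv.swap (0 : Fin 2) 1).injective 0
      (p := φ)
  have hψγ : MvPolynomial.aeval ![β, α] ψ = MvPolynomial.aeval ![α, β] φ := by
    have hswap : ![β, α] ∘ Equiv.swap (0 : Fin 2) 1 = ![α, β] := by
      funext i
      fin_cases i <;> rfl
    rw [MvPolynomial.aeval_rename, hswap]
  have hβ := hcop.symm.dvd_of_dvd_mul_right <| natDegree_minpoly_dvd_of_aeval_dvd (φ := ψ)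
    (hψ₀ ▸ hy₀) (hψ₀ ▸ hy₁) (hψ₁ ▸ hx₁.trans_le (hminFac_le α)) (dvd_mul_left _ _)
    (by rw [hψγ]; exact dvd_mul_right _ _)
  exact hcop.mul_dvd_of_dvd_of_dvd hα hβ

end Conjugates

theorem exists_mem_roots_map_natDegree_minpoly_eq {F K : Type*} [Field F] [Field K]
    [IsAlgClosed K] [Algebra F K] {p : F[X]} (hp : Irreducible p) :
    ∃ x ∈ (p.map (algebraMap F K)).roots, (minpoly F x).natDegree = p.natDegree := by
  obtain ⟨x, hx⟩ := IsAlgClosed.exists_aeval_eq_zero K p (degree_pos_of_irreducible hp).ne'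
  refine ⟨x, (mem_roots_map hp.ne_zero).mpr hx, ?_⟩
  rw [← minpoly.eq_of_irreducible hp hx,
    natDegree_mul_C (inv_ne_zero (leadingCoeff_ne_zero.mpr hp.ne_zero))]

theorem Polynomial.Monic.irreducible_of_aeval_eq_zero {F K : Type*} [Field F] [Field K]
    [Algebra F K] {p : F[X]} (hp : p.Monic) {x : K} (hx : IsIntegral F x) (h0 : aeval x p = 0)
    (hdeg : p.natDegree ≤ (minpoly F x).natDegree) : Irreducible p := by
  rw [eq_of_monic_of_dvd_of_natDegree_le (minpoly.monic hx) hp (minpoly.dvd F x h0) hdeg]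
  exact minpoly.irreducible hx

theorem stmt_12_general {F : Type*} [Field F] [Fintype F]
    (m n m₁ n₁ : ℕ) (hmn : Nat.Coprime m n)
    (hm₁ : m₁ = m.minFac) (hn₁ : n₁ = n.minFac)
    (φ : MvPolynomial (Fin 2) F)
    (hx₀ : 0 < φ.degreeOf 0) (hx₁ : φ.degreeOf 0 < m₁)
    (hy₀ : 0 < φ.degreeOf 1) (hy₁ : φ.degreeOf 1 < n₁)
    (f g : Polynomial F)
    (hfi : Irreducible f) (hgi : Irreducible g)
    (hfd : f.natDegree = m) (hgd : g.natDegree = n)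
    (h : Polynomial F)
    (hh : h.map (algebraMap F (AlgebraicClosure F)) =
      ((((f.map (algebraMap F (AlgebraicClosure F))).roots.bind fun α =>
          (g.map (algebraMap F (AlgebraicClosure F))).roots.map fun β =>
            MvPolynomial.aeval ![α, β] φ).map
        fun γ => X - C γ)).prod) :
    Irreducible h := by
  subst hm₁ hn₁
  set i := algebraMap F (AlgebraicClosure F)
  obtain ⟨α, hα, hαm⟩ := exists_mem_roots_map_natDegree_minpoly_eq (K := AlgebraicClosure F) hfi
  obtain ⟨β, hβ, hβn⟩ := exists_mem_roots_map_natDegree_minpoly_eq (K := AlgebraicClosure F) hgi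
  rw [hfd] at hαm
  rw [hgd] at hβn
  subst hαm hβn
  set γ := MvPolynomial.aeval ![α, β] φ
  have hroot : γ ∈ (h.map i).roots := by
    rw [hh, roots_multiset_prod_X_sub_C]
    exact Multiset.mem_bind.mpr ⟨α, hα, Multiset.mem_map_of_mem _ hβ⟩
  have hdeg : h.natDegree = (minpoly F α).natDegree * (minpoly F β).natDegree := by
    rw [← natDegree_map i, hh, natDegree_multiset_prod_X_sub_C_eq_card]
    simp [Multiset.card_bind, IsAlgClosed.card_roots_eq_natDegree, hfd, hgd]
  have hmonic : h.Monic := monic_of_injective i.injective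
    (hh ▸ monic_multiset_prod_of_monic _ _ fun γ _ => monic_X_sub_C γ)
  have hγ : IsIntegral F γ := Algebra.IsIntegral.isIntegral γ
  refine hmonic.irreducible_of_aeval_eq_zero hγ ?_ ?_
  · rwa [mem_roots_map_of_injective i.injective hmonic.ne_zero] at hroot
  · exact hdeg ▸ Nat.le_of_dvd (minpoly.natDegree_pos hγ)
      (mul_dvd_natDegree_minpoly_aeval hmn hx₀ hx₁ hy₀ hy₁)

/-- Let `m, n > 1` be coprime with smallest prime divisors `m₁, n₁`, and let
`φ(x,y) ∈ 𝔽_q[x,y]` with `0 < deg_x φ < m₁` and `0 < deg_y φ < n₁`.  If `f, g` are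
monic irreducible polynomials over `𝔽_q` of degrees `m, n` with roots `α_i`, `β_j`
in the algebraic closure, then `∏_{i,j} (x - φ(α_i, β_j))` is irreducible over `𝔽_q`. -/
theorem stmt_12 {F : Type*} [Field F] [Fintype F] (q : ℕ) (hq : Fintype.card F = q)
    (m n m₁ n₁ : ℕ) (hm : 1 < m) (hn : 1 < n) (hmn : Nat.Coprime m n)
    (hm₁ : m₁ = m.minFac) (hn₁ : n₁ = n.minFac)
    (φ : MvPolynomial (Fin 2) F)
    (hx₀ : 0 < φ.degreeOf 0) (hx₁ : φ.degreeOf 0 < m₁)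
    (hy₀ : 0 < φ.degreeOf 1) (hy₁ : φ.degreeOf 1 < n₁)
    (f g : Polynomial F) (hfm : f.Monic) (hgm : g.Monic)
    (hfi : Irreducible f) (hgi : Irreducible g)
    (hfd : f.natDegree = m) (hgd : g.natDegree = n)
    (h : Polynomial F)
    (hh : h.map (algebraMap F (AlgebraicClosure F)) =
      ((((f.map (algebraMap F (AlgebraicClosure F))).roots.bind fun α =>
          (g.map (algebraMap F (AlgebraicClosure F))).roots.map fun β =>
            MvPolynomial.aeval ![α, β] φ).map
        fun γ => X - C γ)).prod) :
    Irreducible h :=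
  stmt_12_general m n m₁ n₁ hmn hm₁ hn₁ φ hx₀ hx₁ hy₀ hy₁ f g hfi hgi hfd hgd h hh
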